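/- Let X be a finite topological space. Every projective object in the category of abelian data on X is coflasque; in fact, for every projective abelian data P and every closed subset C ⊆ X, the natural map L(C,P) → L(X,P) is injective. -/

import Mathlib

open CategoryTheory Topology CategoryTheory.Limits

/-! Core definitions: abelian data on a finite topological space. -/

abbrev AbData (X : Type) [TopologicalSpace X] : Type 1 := Specialization X ⥤ AddCommGrpCat.{0}
abbrev pt {X : Type} [TopologicalSpace X] (x : X) : Specialization X := Specialization.toEquiv x

section core
variable {X : Type} [TopologicalSpace X]
abbrev stalk (F : AbData X) (x : X) : Type := F.obj (pt x)

lemma naturality_apply {F G : AbData X} (φ : F ⟶ G) {p q : Specialization X} (h : p ⟶ q)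
    (a : F.obj p) : G.map h (φ.app p a) = φ.app q (F.map h a) := by
  have := congrArg (fun (f : F.obj p ⟶ G.obj q) => f a) (φ.naturality h)
  simp only [CategoryTheory.comp_apply] at this
  exact this.symm

/-- Compatible families: the sections of an abelian data over the whole space. -/
def compatSections (F : AbData X) : AddSubgroup (∀ x : X, F.obj (pt x)) where
  carrier := {u | ∀ (x y : X) (h : pt x ≤ pt y), F.map (homOfLE h) (u x) = u y}
  zero_mem' := by intro x y h; simp
  add_mem' := by intro u v hu hv x y h; simp [map_add, hu x y h, hv x y h]
  neg_mem' := by intro u hu x y h; simp [hu x y h]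

/-- The sections functor `Γ(X,-)`. -/
noncomputable def secFunctor (X : Type) [TopologicalSpace X] : AbData X ⥤ AddCommGrpCat.{0} where
  obj F := AddCommGrpCat.of (compatSections F)
  map {F G} φ := AddCommGrpCat.ofHom
    { toFun := fun u => ⟨fun x => φ.app (pt x) (u.1 x), by
        intro x y h
        rw [naturality_apply φ (homOfLE h) (u.1 x), u.2 x y h]⟩
      map_zero' := by apply Subtype.ext; funext x; simp
      map_add' := by intro u v; apply Subtype.ext; funext x; simp }
  map_id := by intro F; apply AddCommGrpCat.ext; intro u; rfl
  map_comp := by intro F G H φ ψ; apply AddCommGrpCat.ext; intro u; rfl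

instance (X : Type) [TopologicalSpace X] : (secFunctor X).Additive where
  map_add := by
    intro F G φ ψ
    apply AddCommGrpCat.ext; intro u; apply Subtype.ext; funext x
    simp [secFunctor, AddMonoidHom.add_apply]
    rfl

noncomputable def cosecOf (F : AbData X) (x : X) : stalk F x →+ DirectSum X (stalk F) :=
  letI := Classical.decEq X
  DirectSum.of (stalk F) x

/-- The relations defining cosections (the colimit presentation). -/
noncomputable def cosecRel (F : AbData X) : AddSubgroup (DirectSum X (stalk F)) :=
  AddSubgroup.closure {w | ∃ (x y : X) (h : pt x ≤ pt y) (a : stalk F x),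
    w = cosecOf F y (F.map (homOfLE h) a) - cosecOf F x a}

/-- Cosections of `F` over the whole space: `L(X,F)`, presented as the quotient of the direct
sum `⊕ₓ F_x` by the relations `r_{xy}(a) - a`. -/
noncomputable def cosecGrp (F : AbData X) : AddCommGrpCat.{0} :=
  AddCommGrpCat.of (DirectSum X (stalk F) ⧸ cosecRel F)

noncomputable def cosecMk (F : AbData X) (x : X) : stalk F x →+ cosecGrp F :=
  (QuotientAddGroup.mk' (cosecRel F)).comp (cosecOf F x)

lemma cosecHom_ext {F : AbData X} {H : Type} [AddCommGroup H] {f g : cosecGrp F →+ H}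
    (h : ∀ (x : X) (a : stalk F x), f (cosecMk F x a) = g (cosecMk F x a)) : f = g := by
  letI := Classical.decEq X
  exact QuotientAddGroup.addMonoidHom_ext _ (DirectSum.addHom_ext fun x a => h x a)

noncomputable def cosecMapAux {F G : AbData X} (φ : F ⟶ G) :
    DirectSum X (stalk F) →+ cosecGrp G :=
  letI := Classical.decEq X
  DirectSum.toAddMonoid (fun x => (cosecMk G x).comp (φ.app (pt x)).hom)

lemma cosecMapAux_of {F G : AbData X} (φ : F ⟶ G) (x : X) (a : stalk F x) :
    cosecMapAux φ (cosecOf F x a) = cosecMk G x (φ.app (pt x) a) := by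
  letI := Classical.decEq X
  simp [cosecMapAux, cosecOf, DirectSum.toAddMonoid_of]

lemma cosecRel_le_ker {F G : AbData X} (φ : F ⟶ G) : cosecRel F ≤ (cosecMapAux φ).ker := by
  rw [cosecRel, AddSubgroup.closure_le]
  rintro w ⟨x, y, h, a, rfl⟩
  have : (cosecMapAux φ) (cosecOf F y ((F.map (homOfLE h)) a) - cosecOf F x a) = 0 := by
    rw [map_sub, cosecMapAux_of, cosecMapAux_of, ← naturality_apply φ (homOfLE h) a]
    show (QuotientAddGroup.mk' (cosecRel G)) (cosecOf G y (G.map (homOfLE h) (φ.app (pt x) a)))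
      - (QuotientAddGroup.mk' (cosecRel G)) (cosecOf G x (φ.app (pt x) a)) = 0
    rw [← map_sub]
    exact (QuotientAddGroup.eq_zero_iff _).mpr
      (AddSubgroup.subset_closure ⟨x, y, h, φ.app (pt x) a, rfl⟩)
  exact this

noncomputable def cosecMap {F G : AbData X} (φ : F ⟶ G) : cosecGrp F →+ cosecGrp G :=
  QuotientAddGroup.lift (cosecRel F) (cosecMapAux φ) (cosecRel_le_ker φ)

lemma cosecMap_mk {F G : AbData X} (φ : F ⟶ G) (x : X) (a : stalk F x) :
    cosecMap φ (cosecMk F x a) = cosecMk G x (φ.app (pt x) a) := cosecMapAux_of φ x a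

/-- The cosections functor `L(X,-)`. -/
noncomputable def cosecFunctor (X : Type) [TopologicalSpace X] : AbData X ⥤ AddCommGrpCat.{0} where
  obj F := cosecGrp F
  map φ := AddCommGrpCat.ofHom (cosecMap φ)
  map_id F := by
    refine AddCommGrpCat.hom_ext (cosecHom_ext fun x a => ?_)
    exact cosecMap_mk (𝟙 F) x a
  map_comp φ ψ := by
    refine AddCommGrpCat.hom_ext (cosecHom_ext fun x a => ?_)
    show cosecMap (φ ≫ ψ) (cosecMk _ x a) = cosecMap ψ (cosecMap φ (cosecMk _ x a))
    rw [cosecMap_mk, cosecMap_mk, cosecMap_mk]; rfl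

instance (X : Type) [TopologicalSpace X] : (cosecFunctor X).Additive where
  map_add := by
    intro F G φ ψ
    refine AddCommGrpCat.hom_ext (cosecHom_ext fun x a => ?_)
    show cosecMap (φ + ψ) (cosecMk F x a) = (cosecMap φ + cosecMap ψ) (cosecMk F x a)
    rw [AddMonoidHom.add_apply, cosecMap_mk, cosecMap_mk, cosecMap_mk]
    show cosecMk G x ((φ.app (pt x) + ψ.app (pt x)) a) = _
    rw [AddCommGrpCat.hom_add_apply, map_add]
end core

section restriction
variable {X : Type} [TopologicalSpace X]

/-- The inclusion of a subspace, as a functor between specialization preorders. -/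
def inc (S : Set X) : Specialization ↥S ⥤ Specialization X :=
  (Specialization.map ⟨(Subtype.val : S → X), continuous_subtype_val⟩).monotone.functor

/-- Restriction of abelian data to a subspace. -/
def restr (S : Set X) : AbData X ⥤ AbData ↥S := (Functor.whiskeringLeft _ _ _).obj (inc S)

lemma subtype_pt_le_iff {S : Set X} (a b : ↥S) : pt a ≤ pt b ↔ pt (a : X) ≤ pt (b : X) := by
  rw [Specialization.toEquiv_le_toEquiv, Specialization.toEquiv_le_toEquiv]
  exact (subtype_specializes_iff b a).trans Iff.rfl

lemma data_map_eq (F : AbData X) {p q : Specialization X} (h h' : p ⟶ q) : F.map h = F.map h' := by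
  congr 1
  apply Subsingleton.elim

/-- Sections of `F` over the subspace `S`: `Γ(S,F)`. -/
noncomputable def secGrpOn (S : Set X) (F : AbData X) : AddCommGrpCat.{0} :=
  (secFunctor ↥S).obj ((restr S).obj F)

/-- Cosections of `F` over the subspace `S`: `L(S,F)`. -/
noncomputable def cosecGrpOn (S : Set X) (F : AbData X) : AddCommGrpCat.{0} :=
  (cosecFunctor ↥S).obj ((restr S).obj F)

/-- Restriction of sections along an inclusion of subspaces `T ⊆ S`. -/
noncomputable def secResOn (F : AbData X) {S T : Set X} (hTS : T ⊆ S) :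
    secGrpOn S F →+ secGrpOn T F where
  toFun u := (⟨fun x => u.1 ⟨x.1, hTS x.2⟩, by
    intro x y h
    have hS : pt (⟨x.1, hTS x.2⟩ : ↥S) ≤ pt (⟨y.1, hTS y.2⟩ : ↥S) := by
      rw [subtype_pt_le_iff]
      exact (subtype_pt_le_iff x y).mp h
    have hu := u.2 ⟨x.1, hTS x.2⟩ ⟨y.1, hTS y.2⟩ hS
    have heq : ((restr T).obj F).map (homOfLE h) = ((restr S).obj F).map (homOfLE hS) :=
      data_map_eq F _ _
    rw [heq]
    exact hu⟩ : compatSections ((restr T).obj F))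
  map_zero' := rfl
  map_add' u v := rfl

noncomputable def cosecExtAux (F : AbData X) {S T : Set X} (hST : S ⊆ T) :
    DirectSum ↥S (stalk ((restr S).obj F)) →+ cosecGrp ((restr T).obj F) :=
  letI := Classical.decEq ↥S
  DirectSum.toAddMonoid (fun x => cosecMk ((restr T).obj F) ⟨x.1, hST x.2⟩)

lemma cosecExtAux_of (F : AbData X) {S T : Set X} (hST : S ⊆ T) (x : ↥S)
    (a : stalk ((restr S).obj F) x) :
    cosecExtAux F hST (cosecOf ((restr S).obj F) x a)
      = cosecMk ((restr T).obj F) ⟨x.1, hST x.2⟩ a := by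
  letI := Classical.decEq ↥S
  simp only [cosecExtAux, cosecOf, DirectSum.toAddMonoid_of]
  erw [DirectSum.toAddMonoid_of]
  rfl

/-- Extension of cosections along an inclusion of subspaces `S ⊆ T`. -/
noncomputable def cosecExtOn (F : AbData X) {S T : Set X} (hST : S ⊆ T) :
    cosecGrp ((restr S).obj F) →+ cosecGrp ((restr T).obj F) := by
  refine QuotientAddGroup.lift _ (cosecExtAux F hST) ?_
  rw [cosecRel, AddSubgroup.closure_le]
  rintro w ⟨x, y, h, a, rfl⟩
  have hT : pt (⟨x.1, hST x.2⟩ : ↥T) ≤ pt (⟨y.1, hST y.2⟩ : ↥T) := by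
    rw [subtype_pt_le_iff]; exact (subtype_pt_le_iff x y).mp h
  have heq : ((restr S).obj F).map (homOfLE h) = ((restr T).obj F).map (homOfLE hT) :=
    data_map_eq F _ _
  rw [SetLike.mem_coe, AddMonoidHom.mem_ker, map_sub, heq, cosecExtAux_of, cosecExtAux_of]
  show QuotientAddGroup.mk' (cosecRel _) (_ - _) = 0
  exact (QuotientAddGroup.eq_zero_iff _).mpr
    (AddSubgroup.subset_closure ⟨⟨x.1, hST x.2⟩, ⟨y.1, hST y.2⟩, hT, a, rfl⟩)

lemma cosecExtOn_mk (F : AbData X) {S T : Set X} (hST : S ⊆ T) (x : ↥S)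
    (a : stalk ((restr S).obj F) x) :
    cosecExtOn F hST (cosecMk ((restr S).obj F) x a)
      = cosecMk ((restr T).obj F) ⟨x.1, hST x.2⟩ a := cosecExtAux_of F hST x a

end restriction

section spaces
variable {X : Type} [TopologicalSpace X]

/-- The minimal open subset containing a point (of a finite space). -/
def minOpen (x : X) : Set X := ⋂₀ {U : Set X | IsOpen U ∧ x ∈ U}

lemma isOpen_minOpen [Finite X] (x : X) : IsOpen (minOpen x) :=
  Set.Finite.isOpen_sInter (Set.toFinite _) (fun _ hU => hU.1)

lemma mem_minOpen_self (x : X) : x ∈ minOpen x := fun _ hU => hU.2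

lemma mem_minOpen_iff {x z : X} : z ∈ minOpen x ↔ pt x ≤ pt z := by
  rw [Specialization.toEquiv_le_toEquiv, specializes_iff_forall_open]
  constructor
  · intro hz s hs hx
    exact hz s ⟨hs, hx⟩
  · intro h U hU
    exact h U hU.1 hU.2

lemma mem_closure_iff_pt_le {x z : X} : z ∈ closure ({x} : Set X) ↔ pt z ≤ pt x := by
  rw [Specialization.toEquiv_le_toEquiv, specializes_iff_mem_closure]

lemma minOpen_anti {y y' : X} (h : pt y ≤ pt y') : minOpen y' ⊆ minOpen y := by
  intro z hz
  rw [mem_minOpen_iff] at hz ⊢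
  exact le_trans h hz

lemma closure_singleton_mono {y y' : X} (h : pt y ≤ pt y') :
    closure ({y} : Set X) ⊆ closure ({y'} : Set X) := by
  intro z hz
  rw [mem_closure_iff_pt_le] at hz ⊢
  exact le_trans hz h
end spaces

section directimages
variable {X Y : Type} [TopologicalSpace X] [TopologicalSpace Y]

/-- Restriction of global sections to sections over a subspace. -/
noncomputable def secResToSub (F : AbData X) (S : Set X) :
    (secFunctor X).obj F →+ secGrpOn S F where
  toFun u := (⟨fun x => u.1 x.1, by
    intro x y h
    have hX : pt (x : X) ≤ pt (y : X) := (subtype_pt_le_iff x y).mp h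
    have hu := u.2 x.1 y.1 hX
    have heq : ((restr S).obj F).map (homOfLE h) = F.map (homOfLE hX) := data_map_eq F _ _
    rw [heq]
    exact hu⟩ : compatSections ((restr S).obj F))
  map_zero' := rfl
  map_add' u v := rfl

noncomputable def cosecFromSubAux (F : AbData X) (S : Set X) :
    DirectSum ↥S (stalk ((restr S).obj F)) →+ cosecGrp F :=
  letI := Classical.decEq ↥S
  DirectSum.toAddMonoid (fun x => cosecMk F x.1)

lemma cosecFromSubAux_of (F : AbData X) (S : Set X) (x : ↥S)
    (a : stalk ((restr S).obj F) x) :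
    cosecFromSubAux F S (cosecOf ((restr S).obj F) x a) = cosecMk F x.1 a := by
  letI := Classical.decEq ↥S
  simp only [cosecFromSubAux, cosecOf, DirectSum.toAddMonoid_of]
  erw [DirectSum.toAddMonoid_of]
  rfl

/-- Extension of cosections over a subspace to global cosections. -/
noncomputable def cosecExtFromSub (F : AbData X) (S : Set X) :
    cosecGrp ((restr S).obj F) →+ cosecGrp F := by
  refine QuotientAddGroup.lift _ (cosecFromSubAux F S) ?_
  rw [cosecRel, AddSubgroup.closure_le]
  rintro w ⟨x, y, h, a, rfl⟩
  have hX : pt (x : X) ≤ pt (y : X) := (subtype_pt_le_iff x y).mp h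
  have heq : ((restr S).obj F).map (homOfLE h) = F.map (homOfLE hX) := data_map_eq F _ _
  rw [SetLike.mem_coe, AddMonoidHom.mem_ker, map_sub, heq, cosecFromSubAux_of,
    cosecFromSubAux_of]
  show QuotientAddGroup.mk' (cosecRel _) (_ - _) = 0
  exact (QuotientAddGroup.eq_zero_iff _).mpr
    (AddSubgroup.subset_closure ⟨x.1, y.1, hX, a, rfl⟩)

lemma cosecExtFromSub_mk (F : AbData X) (S : Set X) (x : ↥S)
    (a : stalk ((restr S).obj F) x) :
    cosecExtFromSub F S (cosecMk ((restr S).obj F) x a) = cosecMk F x.1 a :=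
  cosecFromSubAux_of F S x a

/-- An abelian data is flasque if all restrictions to open subsets are surjective. -/
def Flasque (F : AbData X) : Prop :=
  ∀ U : Set X, IsOpen U → Function.Surjective (secResToSub F U)

/-- An abelian data is coflasque if all extensions from closed subsets are injective. -/
def Coflasque (F : AbData X) : Prop :=
  ∀ C : Set X, IsClosed C → Function.Injective (cosecExtFromSub F C)

/-- The inverse image functor `f⁻¹`. -/
def invIm (f : C(X, Y)) : AbData Y ⥤ AbData X :=
  (Functor.whiskeringLeft _ _ _).obj (Specialization.map f).monotone.functor

/-- The direct image functor `f_*`, defined stalkwise by `(f_* F)_y = Γ(f⁻¹(U_y), F)`. -/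
noncomputable def pushforward (f : C(X, Y)) : AbData X ⥤ AbData Y where
  obj F :=
    { obj := fun y => secGrpOn (f ⁻¹' minOpen (Specialization.ofEquiv y)) F
      map := fun {y y'} h => AddCommGrpCat.ofHom <| secResOn F (Set.preimage_mono (minOpen_anti (leOfHom h)))
      map_id := fun y => by apply AddCommGrpCat.ext; intro u; apply Subtype.ext; rfl
      map_comp := fun h1 h2 => by apply AddCommGrpCat.ext; intro u; apply Subtype.ext; rfl }
  map {F G} φ :=
    { app := fun y => (secFunctor _).map ((restr _).map φ)
      naturality := fun y y' h => by apply AddCommGrpCat.ext; intro u; apply Subtype.ext; rfl }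
  map_id F := by
    apply NatTrans.ext; funext y; apply AddCommGrpCat.ext; intro u; apply Subtype.ext; rfl
  map_comp φ ψ := by
    apply NatTrans.ext; funext y; apply AddCommGrpCat.ext; intro u; apply Subtype.ext; rfl

lemma cosecExtOn_refl (F : AbData X) {S : Set X} (h : S ⊆ S) :
    cosecExtOn F h = AddMonoidHom.id (cosecGrp ((restr S).obj F)) := by
  refine cosecHom_ext fun x a => ?_
  rw [cosecExtOn_mk]
  rfl

lemma cosecExtOn_trans (F : AbData X) {S T V : Set X} (h1 : S ⊆ T) (h2 : T ⊆ V)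
    (h3 : S ⊆ V) :
    cosecExtOn F h3 = (cosecExtOn F h2).comp (cosecExtOn F h1) := by
  refine cosecHom_ext fun x a => ?_
  rw [cosecExtOn_mk, AddMonoidHom.comp_apply, cosecExtOn_mk]
  exact (cosecExtOn_mk F h2 ⟨x.1, h1 x.2⟩ a).symm

lemma cosecExtOn_natural {F G : AbData X} (φ : F ⟶ G) {S T : Set X} (h : S ⊆ T) :
    (cosecMap ((restr T).map φ)).comp (cosecExtOn F h)
      = (cosecExtOn G h).comp (cosecMap ((restr S).map φ)) := by
  refine cosecHom_ext fun x a => ?_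
  rw [AddMonoidHom.comp_apply, AddMonoidHom.comp_apply, cosecExtOn_mk, cosecMap_mk]
  exact (cosecMap_mk ((restr T).map φ) ⟨x.1, h x.2⟩ a).trans (cosecExtOn_mk G h x _).symm

/-- The stalk of `f_! F`: cosections over `f⁻¹(C_y)`. -/
noncomputable def shriekObj (f : C(X, Y)) (F : AbData X) : AbData Y where
  obj y := cosecGrpOn (f ⁻¹' closure {Specialization.ofEquiv y}) F
  map {y y'} h := AddCommGrpCat.ofHom <| cosecExtOn F (Set.preimage_mono (closure_singleton_mono (leOfHom h)))
  map_id y := AddCommGrpCat.hom_ext (cosecExtOn_refl F _)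
  map_comp {y₁ y₂ y₃} h1 h2 := AddCommGrpCat.hom_ext (cosecExtOn_trans F _ _ _)

/-- The codirect image functor `f_!`, defined stalkwise by `(f_! F)_y = L(f⁻¹(C_y), F)`. -/
noncomputable def shriek (f : C(X, Y)) : AbData X ⥤ AbData Y where
  obj F := shriekObj f F
  map {F G} φ :=
    { app := fun y => (cosecFunctor _).map ((restr _).map φ)
      naturality := fun y y' h => AddCommGrpCat.hom_ext (cosecExtOn_natural φ _) }
  map_id F := by
    refine NatTrans.ext (funext fun y => ?_)
    show (cosecFunctor _).map ((restr _).map (𝟙 F)) = _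
    rw [CategoryTheory.Functor.map_id, CategoryTheory.Functor.map_id]
    rfl
  map_comp φ ψ := by
    refine NatTrans.ext (funext fun y => ?_)
    show (cosecFunctor _).map ((restr _).map (φ ≫ ψ)) = _
    rw [CategoryTheory.Functor.map_comp, CategoryTheory.Functor.map_comp]
    rfl
end directimages

instance pushforwardAdditive {X Y : Type} [TopologicalSpace X] [TopologicalSpace Y]
    (f : C(X, Y)) : (pushforward f).Additive where
  map_add := by
    intro F G φ ψ
    refine NatTrans.ext (funext fun y => ?_)
    apply AddCommGrpCat.ext; intro u; apply Subtype.ext; funext x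
    rfl

instance shriekAdditive {X Y : Type} [TopologicalSpace X] [TopologicalSpace Y]
    (f : C(X, Y)) : (shriek f).Additive where
  map_add := by
    intro F G φ ψ
    refine NatTrans.ext (funext fun y => ?_)
    refine AddCommGrpCat.hom_ext (cosecHom_ext fun x a => ?_)
    show cosecMap ((restr _).map (φ + ψ)) (cosecMk _ x a)
      = cosecMap ((restr _).map φ) (cosecMk _ x a) + cosecMap ((restr _).map ψ) (cosecMk _ x a)
    rw [cosecMap_mk, cosecMap_mk, cosecMap_mk]
    exact map_add _ _ _


/-!
Every abelian data `P` is a quotient of its cover `Q`, `Q_p = ⊕_{z ≤ p} P_z`, so a projective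
`P` is a retract of `Q`; since `L(C,-) → L(X,-)` is natural, its injectivity passes to retracts.
For `Q` it has a left inverse when `C` is closed: `L(X,Q) ≅ ⊕_z P_z`, and sending the summand
`P_z` to its copy in `L(C,Q)` when `z ∈ C` and to `0` otherwise is compatible with extension,
because a closed `C` contains every `z` below one of its points.
-/

section cosections
variable {X : Type} [TopologicalSpace X]

lemma cosecMk_map (F : AbData X) {x y : X} (h : pt x ≤ pt y) (a : stalk F x) :
    cosecMk F y (F.map (homOfLE h) a) = cosecMk F x a := by
  rw [← sub_eq_zero]
  show QuotientAddGroup.mk' (cosecRel F) _ - QuotientAddGroup.mk' (cosecRel F) _ = 0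
  rw [← map_sub]
  exact (QuotientAddGroup.eq_zero_iff _).mpr (AddSubgroup.subset_closure ⟨x, y, h, a, rfl⟩)

noncomputable def cosecLift (F : AbData X) {H : Type} [AddCommGroup H]
    (f : ∀ x, stalk F x →+ H)
    (hf : ∀ (x y : X) (h : pt x ≤ pt y) (a : stalk F x), f y (F.map (homOfLE h) a) = f x a) :
    cosecGrp F →+ H :=
  letI := Classical.decEq X
  QuotientAddGroup.lift _ (DirectSum.toAddMonoid f) <| by
    rw [cosecRel, AddSubgroup.closure_le]
    rintro _ ⟨x, y, h, a, rfl⟩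
    rw [SetLike.mem_coe, AddMonoidHom.mem_ker, map_sub, sub_eq_zero, cosecOf, cosecOf,
      DirectSum.toAddMonoid_of, DirectSum.toAddMonoid_of, hf]

lemma cosecLift_mk (F : AbData X) {H : Type} [AddCommGroup H] (f : ∀ x, stalk F x →+ H)
    (hf : ∀ (x y : X) (h : pt x ≤ pt y) (a : stalk F x), f y (F.map (homOfLE h) a) = f x a)
    (x : X) (a : stalk F x) : cosecLift F f hf (cosecMk F x a) = f x a := by
  let := Classical.decEq X
  exact DirectSum.toAddMonoid_of f x a

lemma cosecExtFromSub_natural {F G : AbData X} (φ : F ⟶ G) (S : Set X) :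
    (cosecMap φ).comp (cosecExtFromSub F S)
      = (cosecExtFromSub G S).comp (cosecMap ((restr S).map φ)) := by
  refine cosecHom_ext fun x a => ?_
  rw [AddMonoidHom.comp_apply, AddMonoidHom.comp_apply, cosecExtFromSub_mk]
  exact (cosecMap_mk φ x.1 a).trans
    ((cosecExtFromSub_mk G S x _).symm.trans (congrArg _ (cosecMap_mk ((restr S).map φ) x a).symm))

lemma CategoryTheory.Retract.injective_cosecExtFromSub {P Q : AbData X} (e : Retract P Q)
    (S : Set X) (hQ : Function.Injective (cosecExtFromSub Q S)) :
    Function.Injective (cosecExtFromSub P S) := by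
  have hi : Function.Injective (cosecMap ((restr S).map e.i)) :=
    (AddCommGrpCat.mono_iff_injective ((e.map (restr S ⋙ cosecFunctor ↥S)).i)).mp inferInstance
  have hcomp := congrArg DFunLike.coe (cosecExtFromSub_natural e.i S)
  refine Function.Injective.of_comp (f := cosecMap e.i) ?_
  rw [← AddMonoidHom.coe_comp, hcomp, AddMonoidHom.coe_comp]
  exact hQ.comp hi

lemma Coflasque.of_retract {P Q : AbData X} (e : Retract P Q) (hQ : Coflasque Q) :
    Coflasque P :=
  fun C hC => e.injective_cosecExtFromSub C (hQ C hC)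

lemma Coflasque.of_epi {P Q : AbData X} [Projective P] (π : Q ⟶ P)
    [Epi π] (hQ : Coflasque Q) : Coflasque P :=
  hQ.of_retract ⟨Projective.factorThru (𝟙 P) π, π, Projective.factorThru_comp _ _⟩

end cosections

section cover
variable {X : Type} [TopologicalSpace X] (P : AbData X)

abbrev coverStalk (p : Specialization X) : Type :=
  DirectSum {z : X // pt z ≤ p} (fun z => stalk P z.1)

noncomputable def coverIncl {p : Specialization X} (z : {z : X // pt z ≤ p}) :
    stalk P z.1 →+ coverStalk P p :=
  letI := Classical.decEq {z : X // pt z ≤ p}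
  DirectSum.of (fun z : {z : X // pt z ≤ p} => stalk P z.1) z

noncomputable def coverDesc {p : Specialization X} {H : Type} [AddCommGroup H]
    (f : ∀ z : {z : X // pt z ≤ p}, stalk P z.1 →+ H) : coverStalk P p →+ H :=
  letI := Classical.decEq {z : X // pt z ≤ p}
  DirectSum.toAddMonoid f

variable {P}

lemma coverDesc_incl {p : Specialization X} {H : Type} [AddCommGroup H]
    (f : ∀ z : {z : X // pt z ≤ p}, stalk P z.1 →+ H) (z : {z : X // pt z ≤ p})
    (a : stalk P z.1) : coverDesc P f (coverIncl P z a) = f z a := by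
  let := Classical.decEq {z : X // pt z ≤ p}
  exact DirectSum.toAddMonoid_of f z a

lemma coverStalk_hom_ext {p : Specialization X} {H : Type} [AddCommGroup H]
    {f g : coverStalk P p →+ H}
    (h : ∀ z (a : stalk P z.1), f (coverIncl P z a) = g (coverIncl P z a)) : f = g := by
  let := Classical.decEq {z : X // pt z ≤ p}
  exact DirectSum.addHom_ext h

variable (P)

noncomputable def cover : AbData X where
  obj p := AddCommGrpCat.of (coverStalk P p)
  map {p q} h := AddCommGrpCat.ofHom <| coverDesc P fun z => coverIncl P ⟨z.1, z.2.trans h.le⟩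
  map_id p := AddCommGrpCat.hom_ext <| coverStalk_hom_ext fun z a => coverDesc_incl _ z a
  map_comp h₁ h₂ := AddCommGrpCat.hom_ext <| coverStalk_hom_ext fun z a => by
    simp only [AddCommGrpCat.hom_comp, AddMonoidHom.comp_apply, AddCommGrpCat.hom_ofHom,
      coverDesc_incl]

variable {P}

lemma cover_map_incl {p q : Specialization X} (h : p ⟶ q) (z : {z : X // pt z ≤ p})
    (a : stalk P z.1) :
    (cover P).map h (coverIncl P z a) = coverIncl P ⟨z.1, z.2.trans h.le⟩ a :=
  coverDesc_incl _ z a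

lemma coverDesc_cover_map {p q : Specialization X} (h : p ⟶ q) {H : Type} [AddCommGroup H]
    (f : ∀ z : {z : X // pt z ≤ q}, stalk P z.1 →+ H) (a : coverStalk P p) :
    coverDesc P f ((cover P).map h a) = coverDesc P (fun z => f ⟨z.1, z.2.trans h.le⟩) a := by
  suffices (coverDesc P f).comp ((cover P).map h).hom
      = coverDesc P (fun z => f ⟨z.1, z.2.trans h.le⟩) from DFunLike.congr_fun this a
  refine coverStalk_hom_ext fun z b => (congrArg (coverDesc P f) (cover_map_incl h z b)).trans ?_
  exact (coverDesc_incl f ⟨z.1, z.2.trans h.le⟩ b).trans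
    (coverDesc_incl (fun z : {z : X // pt z ≤ p} => f ⟨z.1, z.2.trans h.le⟩) z b).symm

variable (P)

noncomputable def coverProj : cover P ⟶ P where
  app p := AddCommGrpCat.ofHom <| coverDesc P fun z => (P.map (homOfLE z.2)).hom
  naturality {p q} h := AddCommGrpCat.hom_ext <| coverStalk_hom_ext fun z a => by
    show coverDesc P (fun z => (P.map (homOfLE z.2)).hom) ((cover P).map h (coverIncl P z a))
      = P.map h (coverDesc P (fun z => (P.map (homOfLE z.2)).hom) (coverIncl P z a))
    rw [cover_map_incl, coverDesc_incl, coverDesc_incl, ← ConcreteCategory.comp_apply,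
      ← P.map_comp]
    rfl

lemma coverProj_app_surjective (p : Specialization X) :
    Function.Surjective ((coverProj P).app p) := fun a =>
  ⟨coverIncl P ⟨Specialization.ofEquiv p, le_rfl⟩ a,
    (coverDesc_incl _ ⟨Specialization.ofEquiv p, le_rfl⟩ a).trans
      (congrArg (fun f : P.obj p ⟶ P.obj p => f a) (P.map_id p))⟩

instance : Epi (coverProj P) :=
  have := fun p => (AddCommGrpCat.epi_iff_surjective _).mpr (coverProj_app_surjective P p)
  NatTrans.epi_of_epi_app _

open Classical in
noncomputable def coverRetractionAt (S : Set X) (z : X) :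
    stalk P z →+ cosecGrp ((restr S).obj (cover P)) :=
  if hz : z ∈ S then
    (cosecMk ((restr S).obj (cover P)) ⟨z, hz⟩).comp (coverIncl P ⟨z, le_rfl⟩)
  else 0

noncomputable def coverRetraction (S : Set X) :
    cosecGrp (cover P) →+ cosecGrp ((restr S).obj (cover P)) :=
  cosecLift (cover P) (fun _ => coverDesc P fun z => coverRetractionAt P S z.1)
    fun _ _ h a => coverDesc_cover_map (homOfLE h) _ a

lemma coverRetraction_mk_incl (S : Set X) {y : X} (z : {z : X // pt z ≤ pt y})
    (b : stalk P z.1) :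
    coverRetraction P S (cosecMk (cover P) y (coverIncl P z b)) = coverRetractionAt P S z.1 b :=
  (cosecLift_mk _ _ _ y _).trans (coverDesc_incl _ z b)

lemma coverRetraction_cosecExtFromSub {S : Set X} (hS : IsClosed S)
    (v : cosecGrp ((restr S).obj (cover P))) :
    coverRetraction P S (cosecExtFromSub (cover P) S v) = v := by
  suffices (coverRetraction P S).comp (cosecExtFromSub (cover P) S) = AddMonoidHom.id _ from
    DFunLike.congr_fun this v
  refine cosecHom_ext fun x w => ?_
  rw [AddMonoidHom.comp_apply, cosecExtFromSub_mk, AddMonoidHom.id_apply]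
  suffices (coverRetraction P S).comp (cosecMk (cover P) x.1)
      = cosecMk ((restr S).obj (cover P)) x from DFunLike.congr_fun this w
  refine coverStalk_hom_ext fun z b => ?_
  have hz : z.1 ∈ S := (Specialization.toEquiv_le_toEquiv.mp z.2).mem_closed hS x.2
  have hle : pt (⟨z.1, hz⟩ : S) ≤ pt x := (subtype_pt_le_iff _ _).mpr z.2
  calc coverRetraction P S (cosecMk (cover P) x.1 (coverIncl P z b))
      = cosecMk _ ⟨z.1, hz⟩ (coverIncl P ⟨z.1, le_rfl⟩ b) := by
        rw [coverRetraction_mk_incl, coverRetractionAt, dif_pos hz]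
        rfl
    _ = cosecMk _ x
          (((restr S).obj (cover P)).map (homOfLE hle) (coverIncl P ⟨z.1, le_rfl⟩ b)) :=
        (cosecMk_map _ hle _).symm
    _ = cosecMk _ x (coverIncl P z b) :=
        congrArg _ (cover_map_incl ((inc S).map (homOfLE hle)) ⟨z.1, le_rfl⟩ b)

lemma coflasque_cover : Coflasque (cover P) := fun _ hC =>
  Function.LeftInverse.injective (coverRetraction_cosecExtFromSub P hC)

end cover

open CategoryTheory in
theorem statement18_general {X : Type} [TopologicalSpace X] (P : AbData X)
    (hP : Projective P) :
    Coflasque P ∧ ∀ C : Set X, IsClosed C → Function.Injective (cosecExtFromSub P C) :=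
  have hcoflasque := (coflasque_cover P).of_epi (coverProj P)
  ⟨hcoflasque, hcoflasque⟩

open CategoryTheory in
/-- **Statement 18.** Every projective abelian data on a finite topological space is coflasque:
for every projective `P` and every closed subset `C ⊆ X`, the natural map `L(C,P) → L(X,P)`
is injective. -/
theorem statement18 {X : Type} [TopologicalSpace X] [Finite X] (P : AbData X)
    (hP : Projective P) :
    Coflasque P ∧ ∀ C : Set X, IsClosed C → Function.Injective (cosecExtFromSub P C) :=
  statement18_general P hP
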